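/- For all real numbers α1, α2, α3 > 0 there exists a positive integer n0 = n0(α1, α2, α3) such that for every integer n > n0, R(C_{⟨⟨α1 n⟩⟩}, C_{⟨⟨α2 n⟩⟩}, C_{⟨α3 n⟩}) ≥ max{ 2⟨⟨α1 n⟩⟩ + ⟨⟨α2 n⟩⟩ − 3, (1/2)⟨⟨α1 n⟩⟩ + (1/2)⟨⟨α2 n⟩⟩ + ⟨α3 n⟩ − 2 }; that is, there exists a three-colouring of the edges of the complete graph on max{ 2⟨⟨α1 n⟩⟩ + ⟨⟨α2 n⟩⟩ − 4, (1/2)⟨⟨α1 n⟩⟩ + (1/2)⟨⟨α2 n⟩⟩ + ⟨α3 n⟩ − 3 } vertices containing no cycle on ⟨⟨α1 n⟩⟩ vertices in colour 1, no cycle on ⟨⟨α2 n⟩⟩ vertices in colour 2, and no cycle on ⟨α3 n⟩ vertices in colour 3. -/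

import Mathlib

open SimpleGraph

/-- The largest even integer not greater than `x`. -/
noncomputable def evenFloor (x : ℝ) : ℤ := 2 * ⌊x / 2⌋

/-- The largest odd integer not greater than `x`. -/
noncomputable def oddFloor (x : ℝ) : ℤ := 2 * ⌊(x - 1) / 2⌋ + 1

/-- `G` contains a cycle on exactly `m` vertices. -/
def HasCycleLen {V : Type*} (G : SimpleGraph V) (m : ℕ) : Prop :=
  ∃ (v : V) (w : G.Walk v v), w.IsCycle ∧ w.length = m

/-- The colour-`i` subgraph of the complete graph on `V` whose edges are coloured by `χ`. -/
def colourGraph {V : Type*} (χ : Sym2 V → Fin 3) (i : Fin 3) : SimpleGraph V where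
  Adj u v := u ≠ v ∧ χ s(u, v) = i
  symm := by
    refine ⟨fun u v h => ?_⟩
    refine ⟨h.1.symm, ?_⟩
    rw [Sym2.eq_swap]
    exact h.2
  loopless := ⟨fun u h => h.1 rfl⟩

/-- Every 3-colouring of the edges of the complete graph on `N` vertices yields, for some
`i ∈ {1,2,3}`, a cycle on `mᵢ` vertices all of whose edges have colour `i`. -/
def CycleRamseyProp (m₁ m₂ m₃ N : ℕ) : Prop :=
  ∀ χ : Sym2 (Fin N) → Fin 3,
    HasCycleLen (colourGraph χ 0) m₁ ∨ HasCycleLen (colourGraph χ 1) m₂ ∨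
      HasCycleLen (colourGraph χ 2) m₃

/-- The degree of `v` in `G`. -/
noncomputable def ndeg {V : Type*} (G : SimpleGraph V) (v : V) : ℕ :=
  {u : V | G.Adj v u}.ncard

/-- The number of neighbours of `v` inside the set `S`. -/
noncomputable def degIn {V : Type*} (G : SimpleGraph V) (S : Finset V) (v : V) : ℕ :=
  {u : V | u ∈ S ∧ G.Adj v u}.ncard

/-- The number of ordered pairs `(a, b) ∈ A × B` with `a` adjacent to `b` in `G`. -/
noncomputable def pairCount {V : Type*} (G : SimpleGraph V) (A B : Finset V) : ℕ :=
  {p : V × V | p.1 ∈ A ∧ p.2 ∈ B ∧ G.Adj p.1 p.2}.ncard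

/-- The density `d(A,B)` of the pair `(A, B)` in `G`. -/
noncomputable def density {V : Type*} (G : SimpleGraph V) (A B : Finset V) : ℝ :=
  (pairCount G A B : ℝ) / ((A.card : ℝ) * (B.card : ℝ))

/-- The pair `(A, B)` is `(ε, G)`-regular. -/
def IsRegularPair {V : Type*} (G : SimpleGraph V) (ε : ℝ) (A B : Finset V) : Prop :=
  ∀ A' ⊆ A, ∀ B' ⊆ B, ε * (A.card : ℝ) ≤ (A'.card : ℝ) →
    ε * (B.card : ℝ) ≤ (B'.card : ℝ) →
    |density G A' B' - density G A B| < ε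

/-- The pair `(A, B)` is simultaneously `(ε, Gᵣ)`-regular for `r = 1, 2, 3`. -/
def SimRegular {V : Type*} (ε : ℝ) (G₁ G₂ G₃ : SimpleGraph V) (A B : Finset V) : Prop :=
  IsRegularPair G₁ ε A B ∧ IsRegularPair G₂ ε A B ∧ IsRegularPair G₃ ε A B

/-- `M` is a connected-matching in `G`: a collection of edges, pairwise vertex-disjoint,
all lying in the same connected component of `G`. -/
def IsConnMatching {V : Type*} (G : SimpleGraph V) (M : Finset (V × V)) : Prop :=
  (∀ e ∈ M, G.Adj e.1 e.2) ∧
  (∀ e ∈ M, ∀ f ∈ M, e ≠ f → e.1 ≠ f.1 ∧ e.1 ≠ f.2 ∧ e.2 ≠ f.1 ∧ e.2 ≠ f.2) ∧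
  (∀ e ∈ M, ∀ f ∈ M, G.Reachable e.1 f.1)

/-- `G` contains a connected-matching on at least `m` vertices. -/
def HasConnMatching {V : Type*} (G : SimpleGraph V) (m : ℝ) : Prop :=
  ∃ M : Finset (V × V), IsConnMatching G M ∧ m ≤ 2 * (M.card : ℝ)

/-- `G` contains an odd connected-matching on at least `m` vertices: a connected-matching
whose component also contains an odd cycle. -/
def HasOddConnMatching {V : Type*} (G : SimpleGraph V) (m : ℝ) : Prop :=
  ∃ M : Finset (V × V), IsConnMatching G M ∧ m ≤ 2 * (M.card : ℝ) ∧
    ∃ (v : V) (w : G.Walk v v), w.IsCycle ∧ Odd w.length ∧ ∀ e ∈ M, G.Reachable e.1 v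

/-- `(V₀, V₁, …, V_K)` (given as `P : Fin (K+1) → Finset V`, with `P 0` the exceptional class)
is an `(ε, G₁, G₂, G₃)`-regular partition. -/
def IsRegularPartition3 {V : Type*} [Fintype V] (ε : ℝ) (G₁ G₂ G₃ : SimpleGraph V)
    {K : ℕ} (P : Fin (K + 1) → Finset V) : Prop :=
  (∀ i j, i ≠ j → Disjoint (P i) (P j)) ∧
  (∀ v : V, ∃ i, v ∈ P i) ∧
  ((P 0).card : ℝ) ≤ ε * (Fintype.card V : ℝ) ∧
  (∀ i j : Fin (K + 1), i ≠ 0 → j ≠ 0 → (P i).card = (P j).card) ∧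
  (∀ i : Fin (K + 1), i ≠ 0 →
    (({j : Fin (K + 1) | j ≠ 0 ∧ j ≠ i ∧
        ¬ SimRegular ε G₁ G₂ G₃ (P i) (P j)}.ncard : ℝ) ≤ ε * K))

/-- The colour-`Gc` subgraph of the three-multicoloured `(ε, ξ, Π)`-reduced-graph of the
three-coloured graph with colour subgraphs `G₁, G₂, G₃` and regular partition `P`:
vertices are the non-exceptional classes `P 1, …, P K`; two of them are adjacent if the pair is
simultaneously `(ε, Gᵣ)`-regular for `r = 1,2,3` and receive colour `Gc` if moreover the
`Gc`-density of the pair is at least `ξ`. -/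
def reducedGraph {V : Type*} (ε ξ : ℝ) (G₁ G₂ G₃ : SimpleGraph V) {K : ℕ}
    (P : Fin (K + 1) → Finset V) (Gc : SimpleGraph V) : SimpleGraph (Fin K) where
  Adj a b := a ≠ b ∧
    (SimRegular ε G₁ G₂ G₃ (P a.succ) (P b.succ) ∧
      SimRegular ε G₁ G₂ G₃ (P b.succ) (P a.succ)) ∧
    (ξ ≤ density Gc (P a.succ) (P b.succ) ∧ ξ ≤ density Gc (P b.succ) (P a.succ))
  symm := by
    refine ⟨fun a b h => ?_⟩
    exact ⟨h.1.symm, ⟨h.2.1.2, h.2.1.1⟩, ⟨h.2.2.2, h.2.2.1⟩⟩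
  loopless := ⟨fun a h => h.1 rfl⟩

/-- The two-multicoloured graph induced on `X`, with colour subgraphs `Gγ₁` (colour `γ₁`)
and `Gγ₂` (colour `γ₂`), contains a two-multicoloured spanning subgraph belonging to the class
`H(x₁, x₂, c₁, c₂, γ₁, γ₂)`. -/
def ContainsClassH {V : Type*} [DecidableEq V] (Gγ₁ Gγ₂ : SimpleGraph V) (X : Finset V)
    (x₁ x₂ c₁ c₂ : ℝ) : Prop :=
  ∃ (H₁ H₂ : SimpleGraph V) (X₁ X₂ : Finset V),
    H₁ ≤ Gγ₁ ∧ H₂ ≤ Gγ₂ ∧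
    (∀ u v : V, (H₁ ⊔ H₂).Adj u v → u ∈ X ∧ v ∈ X) ∧
    Disjoint X₁ X₂ ∧ X₁ ∪ X₂ = X ∧
    x₁ ≤ (X₁.card : ℝ) ∧ x₂ ≤ (X₂.card : ℝ) ∧
    (∀ v ∈ X, ((X.card : ℝ) - 1) - c₁ ≤ (degIn (H₁ ⊔ H₂) X v : ℝ)) ∧
    (∀ v ∈ X₁, (1 - c₂) * ((X₁.card : ℝ) - 1) ≤ (degIn H₁ X₁ v : ℝ)) ∧
    (∀ v ∈ X₁, (degIn H₂ X₁ v : ℝ) ≤ c₂ * ((X₁.card : ℝ) - 1)) ∧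
    (∀ v ∈ X₁, (1 - c₂) * (X₂.card : ℝ) ≤ (degIn H₂ X₂ v : ℝ)) ∧
    (∀ v ∈ X₂, (1 - c₂) * (X₁.card : ℝ) ≤ (degIn H₂ X₁ v : ℝ)) ∧
    (∀ v ∈ X₁, (degIn H₁ X₂ v : ℝ) ≤ c₂ * (X₂.card : ℝ)) ∧
    (∀ v ∈ X₂, (degIn H₁ X₁ v : ℝ) ≤ c₂ * (X₁.card : ℝ))

/-- Membership of the structure `H((a − 2η^{1/32})k, (b/2 − 2η^{1/32})k, 3η⁴k, η^{1/32}, γ₁, γ₂)`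
on a vertex set `X`, where `Ga`, `Gb` are the colour-`γ₁` and colour-`γ₂` subgraphs. -/
def MemH1 {V : Type*} [DecidableEq V] (Ga Gb : SimpleGraph V) (a b η : ℝ) (k : ℕ)
    (X : Finset V) : Prop :=
  ContainsClassH Ga Gb X ((a - 2 * η ^ ((1 : ℝ) / 32)) * k)
    ((b / 2 - 2 * η ^ ((1 : ℝ) / 32)) * k) (3 * η ^ 4 * k) (η ^ ((1 : ℝ) / 32))

/-- The edge `uv` is coloured exclusively with the colour of `Ga` (and not the colours of
`Gb`, `Gc`). -/
def ExclColour {V : Type*} (Ga Gb Gc : SimpleGraph V) (u v : V) : Prop :=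
  Ga.Adj u v ∧ ¬ Gb.Adj u v ∧ ¬ Gc.Adj u v

/-- The three-multicoloured graph with colour subgraphs `G₁, G₂, G₃` (red, blue, green)
contains a subgraph from the class `K(x₁, x₂, x₃, c)`. -/
def ContainsClassK {V : Type*} [DecidableEq V] (G₁ G₂ G₃ : SimpleGraph V)
    (x₁ x₂ x₃ c : ℝ) : Prop :=
  ∃ (H : SimpleGraph V) (X₁ X₂ X₃ : Finset V),
    H ≤ G₁ ⊔ G₂ ⊔ G₃ ∧
    Disjoint X₁ X₂ ∧ Disjoint X₁ X₃ ∧ Disjoint X₂ X₃ ∧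
    x₁ ≤ (X₁.card : ℝ) ∧ x₂ ≤ (X₂.card : ℝ) ∧ x₃ ≤ (X₃.card : ℝ) ∧
    (∀ u v : V, H.Adj u v → u ∈ X₁ ∪ X₂ ∪ X₃ ∧ v ∈ X₁ ∪ X₂ ∪ X₃) ∧
    (∀ v ∈ X₁ ∪ X₂ ∪ X₃,
      (((X₁ ∪ X₂ ∪ X₃).card : ℝ) - 1) - c ≤ (degIn H (X₁ ∪ X₂ ∪ X₃) v : ℝ)) ∧
    (∀ u ∈ X₁, ∀ v ∈ X₃, H.Adj u v → ExclColour G₁ G₂ G₃ u v) ∧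
    (∀ u ∈ X₂, ∀ v ∈ X₃, H.Adj u v → ExclColour G₂ G₁ G₃ u v) ∧
    (∀ u ∈ X₃, ∀ v ∈ X₃, H.Adj u v → ExclColour G₃ G₁ G₂ u v)

/-- The three-multicoloured graph with colour subgraphs `G₁, G₂, G₃` (red, blue, green)
contains a subgraph from the class `K*(x₁, x₂, y₁, y₂, z, c)`. -/
def ContainsClassKstar {V : Type*} [DecidableEq V] (G₁ G₂ G₃ : SimpleGraph V)
    (x₁ x₂ y₁ y₂ z c : ℝ) : Prop :=
  ∃ (H : SimpleGraph V) (X₁ X₂ Y₁ Y₂ : Finset V),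
    H ≤ G₁ ⊔ G₂ ⊔ G₃ ∧
    Disjoint X₁ X₂ ∧ Disjoint X₁ Y₁ ∧ Disjoint X₁ Y₂ ∧
    Disjoint X₂ Y₁ ∧ Disjoint X₂ Y₂ ∧ Disjoint Y₁ Y₂ ∧
    x₁ ≤ (X₁.card : ℝ) ∧ x₂ ≤ (X₂.card : ℝ) ∧ y₁ ≤ (Y₁.card : ℝ) ∧ y₂ ≤ (Y₂.card : ℝ) ∧
    z ≤ (Y₁.card : ℝ) + (Y₂.card : ℝ) ∧
    (∀ u v : V, H.Adj u v → u ∈ X₁ ∪ X₂ ∪ Y₁ ∪ Y₂ ∧ v ∈ X₁ ∪ X₂ ∪ Y₁ ∪ Y₂) ∧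
    (∀ v ∈ X₁ ∪ X₂ ∪ Y₁ ∪ Y₂,
      (((X₁ ∪ X₂ ∪ Y₁ ∪ Y₂).card : ℝ) - 1) - c ≤ (degIn H (X₁ ∪ X₂ ∪ Y₁ ∪ Y₂) v : ℝ)) ∧
    (∀ u ∈ X₁, ∀ v ∈ Y₁, H.Adj u v → ExclColour G₁ G₂ G₃ u v) ∧
    (∀ u ∈ X₂, ∀ v ∈ Y₂, H.Adj u v → ExclColour G₁ G₂ G₃ u v) ∧
    (∀ u ∈ X₁, ∀ v ∈ Y₂, H.Adj u v → ExclColour G₂ G₁ G₃ u v) ∧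
    (∀ u ∈ X₂, ∀ v ∈ Y₁, H.Adj u v → ExclColour G₂ G₁ G₃ u v) ∧
    (∀ u ∈ X₁, ∀ v ∈ X₂, H.Adj u v → ExclColour G₃ G₁ G₂ u v) ∧
    (∀ u ∈ Y₁, ∀ v ∈ Y₂, H.Adj u v → ExclColour G₃ G₁ G₂ u v)

/-!
Write `m₁ = ⟪α₁n⟫`, `m₂ = ⟪α₂n⟫` (even) and `m₃ = ⟨α₃n⟩` (odd). Both colourings are blow-ups of
colourings of small complete graphs: every vertex lies in a part, and the colour of an edge only
depends on the parts of its ends.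

For `2m₁ + m₂ - 4` vertices take two blocks, each the union of a part `X` of size `m₁ - 1` and a
part `Y` of size `m₂/2 - 1`. Colour 1 is used inside each `X`, colour 2 on the other edges inside
a block and colour 3 between the blocks. A colour-1 cycle stays in one `X`; a colour-2 cycle stays
in one block and each of its edges meets the `Y` of that block, so it has at most `m₂ - 2`
vertices; and colour 3 is bipartite while `m₃` is odd.

For `m₁/2 + m₂/2 + m₃ - 3` vertices take parts `X₁, X₂, Y` of sizes `m₁/2 - 1`, `m₂/2 - 1`,
`m₃ - 1`. Colour 1 is used on the edges meeting `X₁` but not `X₂`, colour 2 on those meeting `X₂`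
but not `X₁`, and colour 3 inside `Y` and between `X₁` and `X₂`. So `X₁`, `X₂` are vertex covers of
colours 1, 2 of size less than half the forbidden length, and colour 3 is a clique on `m₃ - 1`
vertices plus a bipartite graph.
-/

open Finset

namespace SimpleGraph.Walk

variable {V : Type*} {G : SimpleGraph V}

lemma support_subset_of_adj_closed {S : Set V} {u v : V} (w : G.Walk u v)
    (hS : ∀ ⦃a b⦄, G.Adj a b → a ∈ S → b ∈ S) (hu : u ∈ S) : ∀ x ∈ w.support, x ∈ S := by
  induction w with
  | nil => simpa using hu
  | cons h w ih =>
    intro x hx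
    rw [support_cons, List.mem_cons] at hx
    exact hx.elim (· ▸ hu) (ih (hS h hu) x)

lemma even_length_iff_of_adj_closed {u v : V} (w : G.Walk u v) (f : V → Bool) {S : Set V}
    (hS : ∀ ⦃a b⦄, G.Adj a b → a ∈ S → b ∈ S ∧ f a ≠ f b) (hu : u ∈ S) :
    Even w.length ↔ f u = f v := by
  induction w with
  | nil => simp
  | cons h w ih =>
    obtain ⟨hS', hf⟩ := hS h hu
    rw [length_cons, Nat.even_add_one, ih hS']
    revert hf
    cases f _ <;> cases f _ <;> simp

variable [DecidableEq V] {u : V} {w : G.Walk u u}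

lemma IsCycle.length_le_card_of_support_subset (hw : w.IsCycle) {S : Finset V}
    (hS : ∀ x ∈ w.support, x ∈ S) : w.length ≤ #S :=
  calc w.length = #w.support.tail.toFinset := by
        rw [List.toFinset_card_of_nodup hw.support_nodup, List.length_tail, length_support]; rfl
    _ ≤ #S := card_le_card fun x hx => hS x (List.mem_of_mem_tail (List.mem_toFinset.mp hx))

/-- Each vertex of `X` starts at most one step of the cycle and ends at most one. -/
lemma IsCycle.length_le_two_mul_card_of_covers_edges (hw : w.IsCycle) {X : Finset V}
    (hX : ∀ i < w.length, w.getVert i ∈ X ∨ w.getVert (i + 1) ∈ X) : w.length ≤ 2 * #X := by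
  have hstart : #{i ∈ range w.length | w.getVert i ∈ X} ≤ #X := by
    refine card_le_card_of_injOn w.getVert (fun i hi => (mem_filter.mp hi).2)
      fun i hi j hj hij => ?_
    simp only [mem_coe, mem_filter, mem_range] at hi hj
    exact hw.getVert_injOn' (show i ≤ w.length - 1 by omega) (show j ≤ w.length - 1 by omega) hij
  have hend : #{i ∈ range w.length | w.getVert i ∉ X} ≤ #X := by
    refine card_le_card_of_injOn (fun i => w.getVert (i + 1)) (fun i hi => ?_)
      fun i hi j hj hij => ?_
    · simp only [mem_coe, mem_filter, mem_range] at hi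
      exact (hX i hi.1).resolve_left hi.2
    · simp only [mem_coe, mem_filter, mem_range] at hi hj
      have := hw.getVert_injOn (show 1 ≤ i + 1 ∧ i + 1 ≤ w.length by omega)
        (show 1 ≤ j + 1 ∧ j + 1 ≤ w.length by omega) hij
      omega
  have := card_filter_add_card_filter_not (s := range w.length) (fun i => w.getVert i ∈ X)
  rw [card_range] at this
  omega

end SimpleGraph.Walk

section BlowUp

variable {ι V : Type*}

def blowUp (part : V → ι) (T : Sym2 ι → Fin 3) : Sym2 V → Fin 3 := fun e => T (e.map part)

variable {part : V → ι} {T : Sym2 ι → Fin 3} {c : Fin 3}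

lemma blowUp_support_subset (P : Finset ι) (hP : ∀ i ∈ P, ∀ j, T s(i, j) = c → j ∈ P)
    {u v : V} (w : (colourGraph (blowUp part T) c).Walk u v) (hu : part u ∈ P) :
    ∀ x ∈ w.support, part x ∈ P :=
  w.support_subset_of_adj_closed (S := part ⁻¹' P) (fun _ _ hab ha => hP _ ha _ hab.2) hu

lemma blowUp_even_length (P : Finset ι) (hP : ∀ i ∈ P, ∀ j, T s(i, j) = c → j ∈ P)
    (side : ι → Bool) (hside : ∀ i ∈ P, ∀ j ∈ P, T s(i, j) = c → side i ≠ side j)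
    {u : V} (w : (colourGraph (blowUp part T) c).Walk u u) (hu : part u ∈ P) :
    Even w.length :=
  (w.even_length_iff_of_adj_closed (side ∘ part) (S := part ⁻¹' P)
    (fun _ _ hab ha => ⟨hP _ ha _ hab.2, hside _ ha _ (hP _ ha _ hab.2) hab.2⟩) hu).mpr rfl

variable [DecidableEq ι] [Fintype V] [DecidableEq V] {u : V}
  {w : (colourGraph (blowUp part T) c).Walk u u}

lemma blowUp_cycle_length_le_card {k : ι} (hk : ∀ j, T s(k, j) = c → j = k)
    (hw : w.IsCycle) (hu : part u = k) : w.length ≤ #{v | part v = k} :=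
  hw.length_le_card_of_support_subset fun x hx => by
    simpa using blowUp_support_subset {k} (by simpa using hk) w (by simpa using hu) x hx

lemma blowUp_cycle_length_le_two_mul_card (P : Finset ι)
    (hP : ∀ i ∈ P, ∀ j, T s(i, j) = c → j ∈ P) {k : ι}
    (hk : ∀ i ∈ P, ∀ j ∈ P, T s(i, j) = c → i = k ∨ j = k)
    (hw : w.IsCycle) (hu : part u ∈ P) : w.length ≤ 2 * #{v | part v = k} :=
  hw.length_le_two_mul_card_of_covers_edges fun i hi => by
    have hsupp := blowUp_support_subset P hP w hu
    simpa using hk _ (hsupp _ (w.getVert_mem_support i)) _ (hsupp _ (w.getVert_mem_support _))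
      (w.adj_getVert_succ hi).2

end BlowUp

lemma card_filter_sigma_fst_eq {ι : Type*} [Fintype ι] [DecidableEq ι] (sz : ι → ℕ) (k : ι) :
    #{v : Σ i, Fin (sz i) | v.1 = k} = sz k := by
  rw [← Fintype.card_subtype, Fintype.card_congr (Equiv.sigmaSubtype k), Fintype.card_fin]

def AvoidsCycles {V : Type*} (χ : Sym2 V → Fin 3) (m₁ m₂ m₃ : ℕ) : Prop :=
  ¬ HasCycleLen (colourGraph χ 0) m₁ ∧ ¬ HasCycleLen (colourGraph χ 1) m₂ ∧
    ¬ HasCycleLen (colourGraph χ 2) m₃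

section Transfer

variable {V W : Type*} {m₁ m₂ m₃ : ℕ}

lemma HasCycleLen.map {G : SimpleGraph V} {H : SimpleGraph W} (f : G ↪g H) {m : ℕ} :
    HasCycleLen G m → HasCycleLen H m
  | ⟨v, w, hw, hl⟩ => ⟨f v, w.map f.toHom, hw.map f.injective, by simpa using hl⟩

def colourGraphComap (f : V ↪ W) (χ : Sym2 W → Fin 3) (i : Fin 3) :
    colourGraph (χ ∘ Sym2.map f) i ↪g colourGraph χ i where
  toEmbedding := f
  map_rel_iff' := and_congr f.injective.ne_iff Iff.rfl

lemma AvoidsCycles.comap {χ : Sym2 W → Fin 3} (h : AvoidsCycles χ m₁ m₂ m₃) (f : V ↪ W) :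
    AvoidsCycles (χ ∘ Sym2.map f) m₁ m₂ m₃ :=
  ⟨fun h' => h.1 (h'.map (colourGraphComap f χ 0)),
    fun h' => h.2.1 (h'.map (colourGraphComap f χ 1)),
    fun h' => h.2.2 (h'.map (colourGraphComap f χ 2))⟩

lemma AvoidsCycles.exists_fin [Fintype V] {N : ℕ} (hV : Fintype.card V = N)
    {χ : Sym2 V → Fin 3} (h : AvoidsCycles χ m₁ m₂ m₃) :
    ∃ χ' : Sym2 (Fin N) → Fin 3, AvoidsCycles χ' m₁ m₂ m₃ :=
  ⟨_, h.comap (Fintype.equivFinOfCardEq hV).symm.toEmbedding⟩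

lemma AvoidsCycles.lt_of_cycleRamseyProp {N N' : ℕ} {χ : Sym2 (Fin N') → Fin 3}
    (h : AvoidsCycles χ m₁ m₂ m₃) (hR : CycleRamseyProp m₁ m₂ m₃ N) : N' < N := by
  by_contra! hle
  obtain ⟨h₁, h₂, h₃⟩ := h.comap (Fin.castLEEmb hle)
  rcases hR _ with h | h | h
  exacts [h₁ h, h₂ h, h₃ h]

end Transfer

/-- Parts `0, 1` are the parts `X, Y` of the first block, parts `2, 3` those of the second. -/
def twoBlockSide (i : Fin 4) : Bool := 2 ≤ i

def twoBlockPattern (e : Sym2 (Fin 4)) : Fin 3 :=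
  if e = s(0, 0) ∨ e = s(2, 2) then 0 else if (e.map twoBlockSide).IsDiag then 1 else 2

lemma exists_avoidsCycles_card_two_mul_add {m₁ m₂ m₃ : ℕ} (h₁ : 1 ≤ m₁) (h₂ : 2 ≤ m₂)
    (hm₂ : Even m₂) (hm₃ : Odd m₃) :
    ∃ χ : Sym2 (Fin (2 * m₁ + m₂ - 4)) → Fin 3, AvoidsCycles χ m₁ m₂ m₃ := by
  let sz : Fin 4 → ℕ := ![m₁ - 1, m₂ / 2 - 1, m₁ - 1, m₂ / 2 - 1]
  have hsz : ∀ k, #{v : Σ i, Fin (sz i) | v.1 = k} = sz k := card_filter_sigma_fst_eq sz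
  refine AvoidsCycles.exists_fin (V := Σ i, Fin (sz i)) ?_
    (χ := blowUp Sigma.fst twoBlockPattern) ⟨?_, ?_, ?_⟩
  · simp only [Fintype.card_sigma, Fin.sum_univ_four, Fintype.card_fin, sz, Matrix.cons_val]
    obtain ⟨r, rfl⟩ := hm₂
    omega
  · rintro ⟨v, w, hw, hl⟩
    have hv : sz v.1 = m₁ - 1 := by
      rcases (by decide : ∀ i j, twoBlockPattern s(i, j) = 0 → i = 0 ∨ i = 2) _ _
        (w.adj_snd hw.not_nil).2 with hv | hv <;> rw [hv] <;> rfl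
    have := blowUp_cycle_length_le_card
      ((by decide : ∀ k j, twoBlockPattern s(k, j) = 0 → j = k) v.1) hw rfl
    rw [hsz, hv] at this
    omega
  · rintro ⟨v, w, hw, hl⟩
    have key : ∀ P k, v.1 ∈ P → (∀ i ∈ P, ∀ j, twoBlockPattern s(i, j) = 1 → j ∈ P) →
        (∀ i ∈ P, ∀ j ∈ P, twoBlockPattern s(i, j) = 1 → i = k ∨ j = k) →
        sz k = m₂ / 2 - 1 → False := fun P k hv hP hk hszk => by
      have := blowUp_cycle_length_le_two_mul_card P hP hk hw hv
      rw [hsz, hszk] at this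
      omega
    rcases (by decide : ∀ i : Fin 4, i ∈ ({0, 1} : Finset _) ∨ i ∈ ({2, 3} : Finset _)) v.1
      with hv | hv
    · exact key {0, 1} 1 hv (by decide) (by decide) rfl
    · exact key {2, 3} 3 hv (by decide) (by decide) rfl
  · rintro ⟨v, w, -, hl⟩
    have := blowUp_even_length univ (by simp) twoBlockSide (by decide) w (mem_univ v.1)
    exact Nat.not_even_iff_odd.mpr hm₃ (hl ▸ this)

/-- Parts `0, 1, 2` are `X₁, X₂, Y`. -/
def oddCliquePattern (e : Sym2 (Fin 3)) : Fin 3 :=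
  if 0 ∈ e ∧ 1 ∉ e then 0 else if 1 ∈ e ∧ 0 ∉ e then 1 else 2

lemma exists_avoidsCycles_card_half_add_half_add {m₁ m₂ m₃ : ℕ} (h₁ : 2 ≤ m₁) (h₂ : 2 ≤ m₂)
    (hm₃ : Odd m₃) :
    ∃ χ : Sym2 (Fin (m₁ / 2 + m₂ / 2 + m₃ - 3)) → Fin 3, AvoidsCycles χ m₁ m₂ m₃ := by
  let sz : Fin 3 → ℕ := ![m₁ / 2 - 1, m₂ / 2 - 1, m₃ - 1]
  have hsz : ∀ k, #{v : Σ i, Fin (sz i) | v.1 = k} = sz k := card_filter_sigma_fst_eq sz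
  have h₃ : 1 ≤ m₃ := hm₃.pos
  refine AvoidsCycles.exists_fin (V := Σ i, Fin (sz i)) ?_
    (χ := blowUp Sigma.fst oddCliquePattern) ⟨?_, ?_, ?_⟩
  · simp only [Fintype.card_sigma, Fin.sum_univ_three, Fintype.card_fin, sz, Matrix.cons_val]
    omega
  · rintro ⟨v, w, hw, hl⟩
    have := blowUp_cycle_length_le_two_mul_card (k := 0) univ (by simp) (by decide) hw
      (mem_univ _)
    rw [hsz] at this
    change w.length ≤ 2 * (m₁ / 2 - 1) at this
    omega
  · rintro ⟨v, w, hw, hl⟩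
    have := blowUp_cycle_length_le_two_mul_card (k := 1) univ (by simp) (by decide) hw
      (mem_univ _)
    rw [hsz] at this
    change w.length ≤ 2 * (m₂ / 2 - 1) at this
    omega
  · rintro ⟨v, w, hw, hl⟩
    by_cases hv : v.1 = 2
    · have := blowUp_cycle_length_le_card (by decide) hw hv
      rw [hsz] at this
      change w.length ≤ m₃ - 1 at this
      omega
    · have := blowUp_even_length {0, 1} (by decide) (· = 0) (by decide) w
        ((by decide : ∀ i : Fin 3, i ≠ 2 → i ∈ ({0, 1} : Finset _)) _ hv)
      exact Nat.not_even_iff_odd.mpr hm₃ (hl ▸ this)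

lemma exists_avoidsCycles_card_max {m₁ m₂ m₃ N : ℕ} (h₁ : 2 ≤ m₁) (h₂ : 2 ≤ m₂)
    (hm₂ : Even m₂) (hm₃ : Odd m₃) (hN : N = max (2 * m₁ + m₂ - 4) (m₁ / 2 + m₂ / 2 + m₃ - 3)) :
    ∃ χ : Sym2 (Fin N) → Fin 3, AvoidsCycles χ m₁ m₂ m₃ := by
  subst hN
  rcases max_choice (2 * m₁ + m₂ - 4) (m₁ / 2 + m₂ / 2 + m₃ - 3) with h | h <;> rw [h]
  exacts [exists_avoidsCycles_card_two_mul_add (by omega) h₂ hm₂ hm₃,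
    exists_avoidsCycles_card_half_add_half_add h₁ h₂ hm₃]

lemma even_evenFloor (x : ℝ) : Even (evenFloor x) := ⟨⌊x / 2⌋, two_mul _⟩

lemma two_le_evenFloor {x : ℝ} (hx : 2 ≤ x) : 2 ≤ evenFloor x := by
  have : 1 ≤ ⌊x / 2⌋ := Int.le_floor.mpr (by push_cast; linarith)
  unfold evenFloor
  omega

lemma odd_oddFloor (x : ℝ) : Odd (oddFloor x) := ⟨⌊(x - 1) / 2⌋, rfl⟩

lemma one_le_oddFloor {x : ℝ} (hx : 1 ≤ x) : 1 ≤ oddFloor x := by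
  have : 0 ≤ ⌊(x - 1) / 2⌋ := Int.floor_nonneg.mpr (by linarith)
  unfold oddFloor
  omega

lemma eventually_le_mul_natCast {α : ℝ} (hα : 0 < α) (c : ℝ) :
    ∀ᶠ n : ℕ in Filter.atTop, c ≤ α * n :=
  (tendsto_natCast_atTop_atTop.const_mul_atTop hα).eventually_ge_atTop c

/-- Lower bound: for all `α₁, α₂, α₃ > 0` and all sufficiently large `n`,
`R(C⟪α₁n⟫, C⟪α₂n⟫, C⟨α₃n⟩) ≥ max {2⟪α₁n⟫ + ⟪α₂n⟫ - 3, ⟪α₁n⟫/2 + ⟪α₂n⟫/2 + ⟨α₃n⟩ - 2}`;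
that is, there is a 3-colouring of the complete graph on
`max {2⟪α₁n⟫ + ⟪α₂n⟫ - 4, ⟪α₁n⟫/2 + ⟪α₂n⟫/2 + ⟨α₃n⟩ - 3}` vertices with no cycle on `⟪α₁n⟫`
vertices in colour 1, no cycle on `⟪α₂n⟫` vertices in colour 2 and no cycle on `⟨α₃n⟩` vertices
in colour 3. -/
theorem mixed_parity_ramsey_lower (α₁ α₂ α₃ : ℝ) (hα₁ : 0 < α₁) (hα₂ : 0 < α₂) (hα₃ : 0 < α₃) :
    ∃ n₀ : ℕ, 0 < n₀ ∧ ∀ n : ℕ, n₀ < n →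
      (∀ N : ℕ, CycleRamseyProp (evenFloor (α₁ * n)).toNat (evenFloor (α₂ * n)).toNat
          (oddFloor (α₃ * n)).toNat N →
        (max (2 * evenFloor (α₁ * n) + evenFloor (α₂ * n) - 3)
          (evenFloor (α₁ * n) / 2 + evenFloor (α₂ * n) / 2 + oddFloor (α₃ * n) - 2)).toNat ≤ N) ∧
      ∃ χ : Sym2 (Fin (max (2 * evenFloor (α₁ * n) + evenFloor (α₂ * n) - 4)
          (evenFloor (α₁ * n) / 2 + evenFloor (α₂ * n) / 2 + oddFloor (α₃ * n) - 3)).toNat) →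
            Fin 3,
        ¬ HasCycleLen (colourGraph χ 0) (evenFloor (α₁ * n)).toNat ∧
        ¬ HasCycleLen (colourGraph χ 1) (evenFloor (α₂ * n)).toNat ∧
        ¬ HasCycleLen (colourGraph χ 2) (oddFloor (α₃ * n)).toNat := by
  obtain ⟨n₁, hn₁⟩ := Filter.eventually_atTop.mp ((eventually_le_mul_natCast hα₁ 2).and
    ((eventually_le_mul_natCast hα₂ 2).and (eventually_le_mul_natCast hα₃ 1)))
  refine ⟨n₁ + 1, n₁.succ_pos, fun n hn => ?_⟩
  obtain ⟨h₁, h₂, h₃⟩ := hn₁ n (by omega)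
  set M₁ := evenFloor (α₁ * n)
  set M₂ := evenFloor (α₂ * n)
  set M₃ := oddFloor (α₃ * n)
  have hM₁ : 2 ≤ M₁ := two_le_evenFloor h₁
  have hM₂ : 2 ≤ M₂ := two_le_evenFloor h₂
  have hM₃ : 1 ≤ M₃ := one_le_oddFloor h₃
  have hM₂_even := Int.even_iff.mp (even_evenFloor (α₂ * n))
  have hM₃_odd := Int.odd_iff.mp (odd_oddFloor (α₃ * n))
  obtain ⟨χ, hχ⟩ := exists_avoidsCycles_card_max (m₁ := M₁.toNat) (m₂ := M₂.toNat)
    (m₃ := M₃.toNat) (N := (max (2 * M₁ + M₂ - 4) (M₁ / 2 + M₂ / 2 + M₃ - 3)).toNat)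
    (by omega) (by omega) (Nat.even_iff.mpr (by omega)) (Nat.odd_iff.mpr (by omega)) (by omega)
  refine ⟨fun N hR => ?_, χ, hχ⟩
  have := hχ.lt_of_cycleRamseyProp hR
  omega
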